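/- Let a, c, d, r be positive real constants. Then there exist constants 0 < m ≤ M such that m ≤ |z_{k,j}^±| ≤ M for all integers k and both components j ∈ {1, 2}; in particular every component of every vector Z_k^± is nonzero. -/
import Mathlib

private lemma aux1 (P t M1 : ℝ) (hP : 0 < P) (hM : Real.sqrt P + 2 * |t| ≤ M1) :
    0 < t + Real.sqrt (P + t ^ 2) ∧ t + Real.sqrt (P + t ^ 2) ≤ M1 ∧
      P / M1 ≤ t + Real.sqrt (P + t ^ 2) := by
  have hS0 : 0 ≤ P + t ^ 2 := by positivity
  have hSsq := Real.sq_sqrt hS0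
  have hSnn := Real.sqrt_nonneg (P + t ^ 2)
  have hsPnn := Real.sqrt_nonneg P
  have hsPsq := Real.sq_sqrt hP.le
  have habs : |t| < Real.sqrt (P + t ^ 2) := by
    nlinarith [sq_abs t, abs_nonneg t]
  have hpos : 0 < t + Real.sqrt (P + t ^ 2) := by
    nlinarith [neg_abs_le t]
  have hSle : Real.sqrt (P + t ^ 2) ≤ Real.sqrt P + |t| := by
    have h1 : P + t ^ 2 ≤ (Real.sqrt P + |t|) ^ 2 := by
      nlinarith [sq_abs t, mul_nonneg hsPnn (abs_nonneg t)]
    calc Real.sqrt (P + t ^ 2) ≤ Real.sqrt ((Real.sqrt P + |t|) ^ 2) :=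
          Real.sqrt_le_sqrt h1
      _ = Real.sqrt P + |t| := Real.sqrt_sq (by positivity)
  have hub : t + Real.sqrt (P + t ^ 2) ≤ M1 := by
    nlinarith [le_abs_self t]
  have hM1pos : 0 < M1 := by
    have : (0:ℝ) < Real.sqrt P := Real.sqrt_pos.mpr hP
    nlinarith [abs_nonneg t]
  refine ⟨hpos, hub, ?_⟩
  rw [div_le_iff₀ hM1pos]
  have h1 : Real.sqrt (P + t ^ 2) - t ≤ M1 := by nlinarith [neg_abs_le t]
  nlinarith

/-- The eigenvector `Z_k^+` (see Lemma 3.2). -/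
noncomputable def ZP (a c d r : ℝ) (k : ℤ) : ℝ × ℝ :=
  if k = 0 then (2 * a * c, Real.sqrt (4 * a * c * d))
  else (2 * a * c,
    1 - c - r / (k : ℝ) ^ 2 + Real.sqrt (4 * a * c * d + (c - 1 + r / (k : ℝ) ^ 2) ^ 2))

/-- The eigenvector `Z_k^-` (see Lemma 3.2). -/
noncomputable def ZM (a c d r : ℝ) (k : ℤ) : ℝ × ℝ :=
  if k = 0 then (2 * a * c, -Real.sqrt (4 * a * c * d))
  else (2 * a * c,
    1 - c - r / (k : ℝ) ^ 2 - Real.sqrt (4 * a * c * d + (c - 1 + r / (k : ℝ) ^ 2) ^ 2))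

/-- Lemma 6.1 (i): for positive constants `a,c,d,r` there are constants
`0 < m ≤ M` with `m ≤ |z_{k,j}^±| ≤ M` for all integers `k` and both components
`j ∈ {1,2}`; in particular every component of every `Z_k^±` is nonzero. -/
theorem Z_components_bounded (a c d r : ℝ) (ha : 0 < a) (hc : 0 < c)
    (hd : 0 < d) (hr : 0 < r) :
    (∃ m M : ℝ, 0 < m ∧ m ≤ M ∧
      ∀ k : ℤ,
        (m ≤ |(ZP a c d r k).1| ∧ |(ZP a c d r k).1| ≤ M) ∧
        (m ≤ |(ZP a c d r k).2| ∧ |(ZP a c d r k).2| ≤ M) ∧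
        (m ≤ |(ZM a c d r k).1| ∧ |(ZM a c d r k).1| ≤ M) ∧
        (m ≤ |(ZM a c d r k).2| ∧ |(ZM a c d r k).2| ≤ M)) ∧
    ∀ k : ℤ, (ZP a c d r k).1 ≠ 0 ∧ (ZP a c d r k).2 ≠ 0 ∧
      (ZM a c d r k).1 ≠ 0 ∧ (ZM a c d r k).2 ≠ 0 := by
  have hPpos : (0:ℝ) < 4 * a * c * d := by positivity
  have hsP : 0 < Real.sqrt (4 * a * c * d) := Real.sqrt_pos.mpr hPpos
  set B : ℝ := |c - 1| + r with hBdef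
  have hBpos : 0 < B := by positivity
  set M1 : ℝ := Real.sqrt (4 * a * c * d) + 2 * B with hM1def
  have hM1pos : 0 < M1 := by positivity
  set m : ℝ := min (2 * a * c) (min (Real.sqrt (4 * a * c * d)) ((4 * a * c * d) / M1))
    with hmdef
  set Mv : ℝ := max (2 * a * c) (max (Real.sqrt (4 * a * c * d)) M1) with hMvdef
  have hmpos : 0 < m := by
    refine lt_min (by positivity) (lt_min hsP (by positivity))
  have hmsP : m ≤ Real.sqrt (4 * a * c * d) := le_trans (min_le_right _ _) (min_le_left _ _)
  have hsPM : Real.sqrt (4 * a * c * d) ≤ Mv := le_trans (le_max_left _ _) (le_max_right _ _)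
  have hmP : m ≤ (4 * a * c * d) / M1 := le_trans (min_le_right _ _) (min_le_right _ _)
  have hM1M : M1 ≤ Mv := le_trans (le_max_right _ _) (le_max_right _ _)
  have h2ac : m ≤ |2 * a * c| ∧ |2 * a * c| ≤ Mv := by
    rw [abs_of_pos (by positivity)]
    exact ⟨min_le_left _ _, le_max_left _ _⟩
  have key : ∀ k : ℤ,
      (m ≤ |(ZP a c d r k).2| ∧ |(ZP a c d r k).2| ≤ Mv) ∧
      (m ≤ |(ZM a c d r k).2| ∧ |(ZM a c d r k).2| ≤ Mv) := by
    intro k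
    by_cases hk : k = 0
    · subst hk
      have e1 : (ZP a c d r 0).2 = Real.sqrt (4 * a * c * d) := rfl
      have e2 : (ZM a c d r 0).2 = -Real.sqrt (4 * a * c * d) := rfl
      rw [e1, e2, abs_neg, abs_of_nonneg (Real.sqrt_nonneg _)]
      exact ⟨⟨hmsP, hsPM⟩, hmsP, hsPM⟩
    · simp only [ZP, ZM, if_neg hk]
      set u : ℝ := 1 - c - r / (k : ℝ) ^ 2 with hudef
      have hk2 : (1:ℝ) ≤ (k : ℝ) ^ 2 := by
        have h1 : (1:ℤ) ≤ k ^ 2 := by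
          have h2 : (1:ℤ) ≤ |k| := Int.one_le_abs (by exact_mod_cast hk)
          nlinarith [sq_abs k]
        exact_mod_cast h1
      have hspos : 0 < r / (k : ℝ) ^ 2 := by positivity
      have hsle : r / (k : ℝ) ^ 2 ≤ r := by
        rw [div_le_iff₀ (by positivity)]; nlinarith
      have huB : |u| ≤ B := by
        have : |u| ≤ |c - 1| + |r / (k : ℝ) ^ 2| := by
          have : u = -(c - 1) + -(r / (k : ℝ) ^ 2) := by rw [hudef]; ring
          rw [this]
          calc |(-(c - 1) + -(r / (k : ℝ) ^ 2))| ≤ |(-(c-1))| + |(-(r / (k : ℝ) ^ 2))| :=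
                abs_add_le _ _
            _ = |c - 1| + |r / (k : ℝ) ^ 2| := by rw [abs_neg, abs_neg]
        rw [abs_of_pos hspos] at this
        linarith
      have hrw : (c - 1 + r / (k : ℝ) ^ 2) ^ 2 = u ^ 2 := by rw [hudef]; ring
      rw [hrw]
      have hMP : Real.sqrt (4 * a * c * d) + 2 * |u| ≤ M1 := by
        rw [hM1def]; linarith
      have hMN : Real.sqrt (4 * a * c * d) + 2 * |(-u)| ≤ M1 := by
        rw [abs_neg]; exact hMP
      obtain ⟨hp1, hp2, hp3⟩ := aux1 (4 * a * c * d) u M1 hPpos hMP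
      obtain ⟨hn1, hn2, hn3⟩ := aux1 (4 * a * c * d) (-u) M1 hPpos hMN
      rw [neg_sq] at hn1 hn2 hn3
      constructor
      · rw [abs_of_pos hp1]
        refine ⟨le_trans hmP hp3, le_trans hp2 hM1M⟩
      · have he : u - Real.sqrt (4 * a * c * d + u ^ 2) =
            -(-u + Real.sqrt (4 * a * c * d + u ^ 2)) := by ring
        rw [he, abs_neg, abs_of_pos hn1]
        refine ⟨le_trans hmP hn3, le_trans hn2 hM1M⟩
  constructor
  · refine ⟨m, Mv, hmpos, le_trans (min_le_left _ _) (le_max_left _ _), fun k => ?_⟩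
    have h1 : (ZP a c d r k).1 = 2 * a * c := by
      by_cases hk : k = 0 <;> simp [ZP, hk]
    have h2 : (ZM a c d r k).1 = 2 * a * c := by
      by_cases hk : k = 0 <;> simp [ZM, hk]
    rw [h1, h2]
    exact ⟨h2ac, (key k).1, h2ac, (key k).2⟩
  · intro k
    have h1 : (ZP a c d r k).1 = 2 * a * c := by
      by_cases hk : k = 0 <;> simp [ZP, hk]
    have h2 : (ZM a c d r k).1 = 2 * a * c := by
      by_cases hk : k = 0 <;> simp [ZM, hk]
    have hne : ∀ x : ℝ, m ≤ |x| → x ≠ 0 := by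
      intro x hx h0
      rw [h0, abs_zero] at hx
      exact absurd hx (not_le.mpr hmpos)
    exact ⟨by rw [h1]; positivity, hne _ (key k).1.1, by rw [h2]; positivity,
      hne _ (key k).2.1⟩
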